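/- Let Z_1, ..., Z_{N+1} be i.i.d. real-valued random variables with ties occurring with probability zero, and let Q be the ⌈(1-α)(N+1)⌉-th smallest element of {Z_1,...,Z_N} with ⌈(1-α)(N+1)⌉ ≤ N. Then (1-α) ≤ P(Z_{N+1} ≤ Q) ≤ (1-α) + 1/(N+1). -/

import Mathlib

/-!
Write `rank x i` for the number of coordinates of `x` strictly below `x i`. Then
`Z_{N+1} ≤ Q` exactly when `rank Z (N+1) < k` for `k = ⌈(1-α)(N+1)⌉`. The law of `Z` is a product
of identical factors, hence invariant under permuting coordinates, so all `N+1` events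
`rank Z i < k` have the same probability; as ties are null, exactly `k` of them occur almost
surely, so each has probability `k/(N+1)`. Finally `(1-α)(N+1) ≤ k < (1-α)(N+1) + 1`.
-/

open MeasureTheory ProbabilityTheory
open scoped ENNReal

/-- The k-th smallest element (1-indexed) of a finite tuple of reals. -/
noncomputable def kthSmallest {N : ℕ} (v : Fin N → ℝ) (k : ℕ) : ℝ :=
  (List.insertionSort (· ≤ ·) (List.ofFn v)).getD (k - 1) 0

open Finset

theorem List.Pairwise.getElem_lt_iff_lt_countP {α : Type*} [LinearOrder α] {s : List α}
    (hs : s.Pairwise (· ≤ ·)) (t : α) {i : ℕ} (hi : i < s.length) :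
    s[i] < t ↔ i < s.countP (· < t) := by
  induction s generalizing i with
  | nil => simp at hi
  | cons a s ih =>
    obtain ⟨ha, hs⟩ := List.pairwise_cons.mp hs
    by_cases hat : a < t
    · cases i with
      | zero => simp [hat]
      | succ i => simp [hat, ih hs]
    · have hge : ∀ b ∈ a :: s, t ≤ b := by
        simp only [List.mem_cons, forall_eq_or_imp]
        exact ⟨not_lt.mp hat, fun b hb => (not_lt.mp hat).trans (ha b hb)⟩
      rw [List.countP_eq_zero.mpr (by simpa using hge)]
      simpa using hge _ (List.getElem_mem hi)

theorem List.countP_ofFn {α : Type*} {n : ℕ} (v : Fin n → α) (p : α → Bool) :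
    (List.ofFn v).countP p = #{j | p (v j)} := by
  rw [List.ofFn_eq_map, List.countP_map, Fin.univ_def]
  simp [Finset.filter, Finset.card, Multiset.filter_coe, List.countP_eq_length_filter,
    Function.comp_def]

theorem le_kthSmallest_iff {N : ℕ} (v : Fin N → ℝ) (t : ℝ) {k : ℕ} (hk₁ : 1 ≤ k)
    (hkN : k ≤ N) : t ≤ kthSmallest v k ↔ #{j | v j < t} < k := by
  have hsorted := List.pairwise_insertionSort (· ≤ ·) (List.ofFn v)
  have hlen : k - 1 < (List.insertionSort (· ≤ ·) (List.ofFn v)).length := by simp; omega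
  rw [kthSmallest, List.getD_eq_getElem _ _ hlen, ← not_lt, hsorted.getElem_lt_iff_lt_countP,
    (List.perm_insertionSort _ _).countP_eq, List.countP_ofFn]
  simp only [decide_eq_true_eq]
  omega

section Rank

variable {ι α : Type*} [Fintype ι] [LinearOrder α]

def rank (x : ι → α) (i : ι) : ℕ := #{j | x j < x i}

theorem rank_lt_card (x : ι → α) (i : ι) : rank x i < Fintype.card ι :=
  card_lt_card (filter_ssubset.mpr ⟨i, mem_univ i, lt_irrefl _⟩)

theorem rank_lt_rank {x : ι → α} {i j : ι} (h : x i < x j) : rank x i < rank x j :=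
  card_lt_card <| (ssubset_iff_of_subset fun l hl => by
    simp only [mem_filter, mem_univ, true_and] at hl ⊢
    exact hl.trans h).mpr ⟨i, by simp [h], by simp⟩

theorem rank_injective {x : ι → α} (hx : Function.Injective x) : Function.Injective (rank x) := by
  intro i j hij
  by_contra hne
  rcases (hx.ne hne).lt_or_gt with h | h
  · exact (rank_lt_rank h).ne hij
  · exact (rank_lt_rank h).ne' hij

theorem image_rank [DecidableEq ι] {x : ι → α} (hx : Function.Injective x) :
    univ.image (rank x) = range (Fintype.card ι) :=
  eq_of_subset_of_card_le (fun _ hm => by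
      obtain ⟨i, -, rfl⟩ := mem_image.mp hm
      exact mem_range.mpr (rank_lt_card x i))
    (by rw [card_image_of_injective _ (rank_injective hx), card_range, card_univ])

theorem card_rank_lt {x : ι → α} (hx : Function.Injective x) {k : ℕ} (hk : k ≤ Fintype.card ι) :
    #{i | rank x i < k} = k := by
  classical
  rw [← card_image_of_injective _ (rank_injective hx), ← filter_image (p := (· < k)),
    image_rank hx, show {m ∈ range (Fintype.card ι) | m < k} = range k by ext; simp; omega,
    card_range]

theorem rank_comp_perm (x : ι → α) (σ : Equiv.Perm ι) (i : ι) :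
    rank (x ∘ σ) i = rank x (σ i) :=
  card_equiv σ (by simp)

theorem rank_last {N : ℕ} (x : Fin (N + 1) → α) :
    rank x (Fin.last N) = #{j : Fin N | x j.castSucc < x (Fin.last N)} := by
  rw [rank, card_filter, card_filter, Fin.sum_univ_castSucc]
  simp

end Rank

theorem ae_injective_of_measure_eq_null {ι β : Type*} [Countable ι] [MeasurableSpace β]
    (π : Measure (ι → β)) (hties : ∀ i j, i ≠ j → π {x | x i = x j} = 0) :
    ∀ᵐ x ∂π, Function.Injective x := by
  refine measure_mono_null (fun x hx => ?_) (measure_iUnion_null fun i =>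
    measure_iUnion_null fun j => measure_iUnion_null (hties i j))
  obtain ⟨i, j, hij, hne⟩ : ∃ i j, x i = x j ∧ i ≠ j := by
    simpa [Function.Injective] using hx
  exact Set.mem_iUnion₂.mpr ⟨i, j, Set.mem_iUnion.mpr ⟨hne, hij⟩⟩

section Exchangeable

variable {ι α : Type*} [Fintype ι] [MeasurableSpace α] [TopologicalSpace α] [LinearOrder α]
  [OrderClosedTopology α] [OpensMeasurableSpace α] [SecondCountableTopology α]

theorem measurableSet_rank_lt (i : ι) (k : ℕ) : MeasurableSet {x : ι → α | rank x i < k} := by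
  classical
  have hrank : (fun x : ι → α => rank x i) = fun x => ∑ j, if x j < x i then 1 else 0 :=
    funext fun x => card_filter _ _
  have hmeas : Measurable fun x : ι → α => rank x i := by
    rw [hrank]
    exact Finset.measurable_sum _ fun j _ => Measurable.ite
      (measurableSet_lt (measurable_pi_apply j) (measurable_pi_apply i)) measurable_const
      measurable_const
  exact hmeas measurableSet_Iio

theorem measure_rank_lt_of_exchangeable (π : Measure (ι → α)) [IsProbabilityMeasure π]
    (hperm : ∀ σ : Equiv.Perm ι, MeasurePreserving (fun x => x ∘ σ) π π)
    (hties : ∀ i j, i ≠ j → π {x | x i = x j} = 0) {k : ℕ} (hk : k ≤ Fintype.card ι) (i : ι) :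
    π {x | rank x i < k} = k / Fintype.card ι := by
  classical
  have hsymm : ∀ j, π {x | rank x j < k} = π {x | rank x i < k} := fun j => by
    rw [← (hperm (Equiv.swap i j)).measure_preimage (measurableSet_rank_lt i k).nullMeasurableSet]
    congr 1
    ext x
    simp [rank_comp_perm]
  have hcount : ∀ᵐ x ∂π, ∑ j, {x : ι → α | rank x j < k}.indicator 1 x = (k : ℝ≥0∞) :=
    (ae_injective_of_measure_eq_null π hties).mono fun x hx => by
      simp [Set.indicator_apply, sum_boole, card_rank_lt hx hk]
  have hsum : Fintype.card ι * π {x | rank x i < k} = k := calc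
    _ = ∑ j, π {x | rank x j < k} := by simp [hsymm]
    _ = ∫⁻ x, ∑ j, {x : ι → α | rank x j < k}.indicator 1 x ∂π := by
      rw [lintegral_finsetSum _ fun j _ => measurable_one.indicator (measurableSet_rank_lt j k)]
      simp only [lintegral_indicator_one (measurableSet_rank_lt _ k)]
    _ = k := by simp [lintegral_congr_ae hcount]
  have : Nonempty ι := ⟨i⟩
  exact (ENNReal.eq_div_iff (by simp) (by simp)).mpr hsum

end Exchangeable

theorem measurePreserving_pi_comp_perm {ι α : Type*} [Fintype ι] [MeasurableSpace α]
    (μ : Measure α) [SigmaFinite μ] (σ : Equiv.Perm ι) :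
    MeasurePreserving (fun x : ι → α => x ∘ σ) (Measure.pi fun _ => μ)
      (Measure.pi fun _ => μ) := by
  convert measurePreserving_piCongrLeft (fun _ : ι => μ) σ.symm using 1
  ext x j
  simp [MeasurableEquiv.coe_piCongrLeft, Equiv.piCongrLeft_apply]

theorem ofReal_le_natCeil_mul_div_and_le {p : ℝ} (hp : 0 ≤ p) {n : ℕ} (hn : 0 < n) :
    ENNReal.ofReal p ≤ (⌈p * n⌉₊ : ℝ≥0∞) / n ∧
      (⌈p * n⌉₊ : ℝ≥0∞) / n ≤ ENNReal.ofReal p + 1 / n := by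
  have hn' : (0 : ℝ) < n := by exact_mod_cast hn
  have hcast : ∀ m : ℕ, (m : ℝ≥0∞) / n = ENNReal.ofReal (m / n) := fun m => by
    rw [ENNReal.ofReal_div_of_pos hn', ENNReal.ofReal_natCast, ENNReal.ofReal_natCast]
  rw [← Nat.cast_one, hcast, hcast, ← ENNReal.ofReal_add hp (by positivity)]
  constructor <;> apply ENNReal.ofReal_le_ofReal
  · rw [le_div_iff₀ hn']
    exact Nat.le_ceil _
  · rw [div_le_iff₀ hn', add_mul, Nat.cast_one, div_mul_cancel₀ _ hn'.ne']
    exact (Nat.ceil_lt_add_one (by positivity)).le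

theorem stmt1 {Ω : Type*} [MeasurableSpace Ω] (P : Measure Ω) [IsProbabilityMeasure P]
    (N : ℕ) (Z : Fin (N + 1) → Ω → ℝ) (hZ : ∀ i, Measurable (Z i))
    (hindep : iIndepFun Z P)
    (hident : ∀ i, P.map (Z i) = P.map (Z 0))
    (hties : ∀ i j, i ≠ j → P {ω | Z i ω = Z j ω} = 0)
    (α : ℝ) (hα : α ∈ Set.Ioo (0 : ℝ) 1)
    (hn : ⌈(1 - α) * (N + 1)⌉₊ ≤ N) :
    ENNReal.ofReal (1 - α) ≤
        P {ω | Z (Fin.last N) ω ≤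
          kthSmallest (fun i : Fin N => Z i.castSucc ω) ⌈(1 - α) * (N + 1)⌉₊} ∧
      P {ω | Z (Fin.last N) ω ≤
          kthSmallest (fun i : Fin N => Z i.castSucc ω) ⌈(1 - α) * (N + 1)⌉₊}
        ≤ ENNReal.ofReal (1 - α) + 1 / (N + 1) := by
  set k := ⌈(1 - α) * (N + 1)⌉₊
  have hk : 1 ≤ k := Nat.ceil_pos.mpr (mul_pos (by linarith [hα.2]) (by positivity))
  let φ : Ω → Fin (N + 1) → ℝ := fun ω i => Z i ω
  have hφ : Measurable φ := measurable_pi_lambda _ hZ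
  have hlaw : P.map φ = Measure.pi fun _ => P.map (Z 0) := by
    rw [hindep.map_fun_eq_pi_map fun i => (hZ i).aemeasurable]
    simp only [hident]
  have hevent : {ω | Z (Fin.last N) ω ≤ kthSmallest (fun i : Fin N => Z i.castSucc ω) k} =
      φ ⁻¹' {x | rank x (Fin.last N) < k} := by
    ext ω
    simp [le_kthSmallest_iff _ _ hk hn, rank_last, φ]
  have hprob : P (φ ⁻¹' {x | rank x (Fin.last N) < k}) = k / (N + 1) := by
    have := Measure.isProbabilityMeasure_map (μ := P) hφ.aemeasurable
    have hties' : ∀ i j, i ≠ j → P.map φ {x | x i = x j} = 0 := fun i j hij => by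
      rw [Measure.map_apply hφ
        (measurableSet_eq_fun (measurable_pi_apply i) (measurable_pi_apply j))]
      exact hties i j hij
    rw [← Measure.map_apply hφ (measurableSet_rank_lt _ k), measure_rank_lt_of_exchangeable
      (P.map φ) (fun σ => hlaw ▸ measurePreserving_pi_comp_perm _ σ) hties' (by simp; omega),
      Fintype.card_fin]
    push_cast
    rfl
  have hbounds := ofReal_le_natCeil_mul_div_and_le (p := 1 - α) (by linarith [hα.2]) N.succ_pos
  push_cast at hbounds
  rwa [hevent, hprob]
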